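/- Let 𝒢 = {(A_1, a_1), …, (A_K, a_K)} be a finite set of elements of SA(2,ℤ) such that the subsemigroup ⟨A_1, …, A_K⟩ of SL(2,ℤ) is a group which is infinite cyclic and generated by an inverting scale A. Then the subsemigroup ⟨𝒢⟩ of SA(2,ℤ) is a group. -/

import Mathlib

/-!
Let `p, q` be elements of the semigroup with linear parts `A` and `A⁻¹`, and let `T ⊆ ℤ²` be the
additive semigroup of translations `v` with `(I, v)` in the semigroup. Conjugating `(I, v)` by `p`
and by `q` and adding gives `(A + A⁻¹) v + c = (tr A) v + c ∈ T` for a fixed `c ∈ T`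
(Cayley–Hamilton). Since `tr A ≤ -1`, adding `v` to this `-1 - tr A` more times yields
`c - v ∈ T`, hence `-c ∈ T` and `-v ∈ T`: `T` is a group. Every element `g` of the semigroup then
has an inverse in it, namely `g⁻¹ = g' (g g')⁻¹` for a lift `g'` of `g.lin⁻¹`, because `g g'` is a
translation.
-/

open scoped Matrix

abbrev SL2Z := Matrix.SpecialLinearGroup (Fin 2) ℤ

/-- The special affine group `SA(2, ℤ) = ℤ² ⋊ SL(2, ℤ)`, as pairs `(A, a)`. -/
@[ext]
structure SA2 : Type where
  lin : SL2Z
  trans : Fin 2 → ℤ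

namespace SA2

instance : Mul SA2 :=
  ⟨fun p q => ⟨p.lin * q.lin, (p.lin : Matrix (Fin 2) (Fin 2) ℤ) *ᵥ q.trans + p.trans⟩⟩

instance : One SA2 := ⟨⟨1, 0⟩⟩

instance : Inv SA2 :=
  ⟨fun p => ⟨p.lin⁻¹, -(((p.lin⁻¹ : SL2Z) : Matrix (Fin 2) (Fin 2) ℤ) *ᵥ p.trans)⟩⟩

@[simp] lemma mul_lin (p q : SA2) : (p * q).lin = p.lin * q.lin := rfl
@[simp] lemma mul_trans (p q : SA2) :
    (p * q).trans = (p.lin : Matrix (Fin 2) (Fin 2) ℤ) *ᵥ q.trans + p.trans := rfl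
@[simp] lemma one_lin : (1 : SA2).lin = 1 := rfl
@[simp] lemma one_trans : (1 : SA2).trans = 0 := rfl
@[simp] lemma inv_lin (p : SA2) : (p⁻¹).lin = p.lin⁻¹ := rfl
@[simp] lemma inv_trans (p : SA2) :
    (p⁻¹).trans = -(((p.lin⁻¹ : SL2Z) : Matrix (Fin 2) (Fin 2) ℤ) *ᵥ p.trans) := rfl

instance : Group SA2 where
  mul_assoc a b c := by
    ext i
    · rw [mul_lin, mul_lin, mul_lin, mul_lin, mul_assoc]
    · simp only [mul_trans, mul_lin, Matrix.SpecialLinearGroup.coe_mul, Matrix.mulVec_add,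
        Matrix.mulVec_mulVec, add_assoc]
  one_mul a := by
    ext i
    · simp
    · simp
  mul_one a := by
    ext i
    · simp
    · simp [Matrix.mulVec_zero]
  inv_mul_cancel a := by
    ext i
    · simp
    · simp only [mul_trans, inv_trans, inv_lin, one_trans, add_neg_cancel]

end SA2

/-- A subsemigroup `S` of a group is a group if it contains the neutral element and
is closed under inverses. -/
def Subsemigroup.IsSubgroup {G : Type*} [Group G] (S : Subsemigroup G) : Prop :=
  (1 : G) ∈ S ∧ ∀ x ∈ S, x⁻¹ ∈ S

/-- An *inverting scale*: trace at most `-3` (real eigenvalue `λ < -1`). -/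
def IsInvertingScale (A : SL2Z) : Prop :=
  Matrix.trace (A : Matrix (Fin 2) (Fin 2) ℤ) ≤ -3

namespace AddSubsemigroup

variable {M : Type*} [AddCommGroup M] (T : AddSubsemigroup M)

theorem nsmul_add_mem {v w : M} (hv : v ∈ T) (hw : w ∈ T) (n : ℕ) : n • v + w ∈ T := by
  induction n with
  | zero => simpa using hw
  | succ n ih => rw [succ_nsmul', add_assoc]; exact T.add_mem hv ih

theorem neg_mem_of_zsmul_add_mem {t : ℤ} (ht : t ≤ -1) {c : M} (hc : c ∈ T)
    (h : ∀ v ∈ T, t • v + c ∈ T) {v : M} (hv : v ∈ T) : -v ∈ T := by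
  have sub_mem : ∀ v ∈ T, c - v ∈ T := by
    intro v hv
    obtain ⟨n, rfl⟩ : ∃ n : ℕ, t = -1 - n := ⟨(-1 - t).toNat, by omega⟩
    convert T.nsmul_add_mem hv (h v hv) n using 1
    rw [sub_zsmul, natCast_zsmul]
    abel
  have neg_c : -c ∈ T := by
    convert sub_mem _ (T.add_mem hc hc) using 1
    abel
  convert T.add_mem (sub_mem v hv) neg_c using 1
  abel

end AddSubsemigroup

theorem Matrix.SpecialLinearGroup.coe_add_coe_inv {R : Type*} [CommRing R]
    (A : SpecialLinearGroup (Fin 2) R) :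
    (A : Matrix (Fin 2) (Fin 2) R) + ↑A⁻¹ = trace (A : Matrix (Fin 2) (Fin 2) R) • 1 := by
  rw [coe_inv, adjugate_fin_two, trace_fin_two]
  ext i j
  fin_cases i <;> fin_cases j <;> simp [add_comm]

namespace SA2

def linHom : SA2 →ₙ* SL2Z := ⟨lin, fun _ _ => rfl⟩

def translation (v : Fin 2 → ℤ) : SA2 := ⟨1, v⟩

theorem translation_mul_translation (v w : Fin 2 → ℤ) :
    translation v * translation w = translation (v + w) := by
  ext <;> simp [translation, add_comm]

theorem eq_translation_of_lin_eq_one {s : SA2} (h : s.lin = 1) : s = translation s.trans := by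
  ext <;> simp [translation, h]

theorem inv_translation (v : Fin 2 → ℤ) : (translation v)⁻¹ = translation (-v) := by
  ext <;> simp [translation]

theorem trans_mul_translation_mul (p q : SA2) (v : Fin 2 → ℤ) :
    (p * translation v * q).trans = (p.lin : Matrix (Fin 2) (Fin 2) ℤ) *ᵥ v + (p * q).trans := by
  simp only [mul_trans, mul_lin, translation, mul_one]
  abel

def translations (S : Subsemigroup SA2) : AddSubsemigroup (Fin 2 → ℤ) where
  carrier := {v | translation v ∈ S}
  add_mem' {v w} hv hw := show translation (v + w) ∈ S from
    translation_mul_translation v w ▸ mul_mem hv hw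

variable {S : Subsemigroup SA2}

theorem mem_translations {v : Fin 2 → ℤ} : v ∈ translations S ↔ translation v ∈ S := Iff.rfl

theorem trans_mem_translations {s : SA2} (hs : s ∈ S) (h : s.lin = 1) :
    s.trans ∈ translations S :=
  mem_translations.2 (eq_translation_of_lin_eq_one h ▸ hs)

theorem neg_mem_translations {A : SL2Z} (hA : Matrix.trace (A : Matrix (Fin 2) (Fin 2) ℤ) ≤ -1)
    {p q : SA2} (hp : p ∈ S) (hq : q ∈ S) (hpA : p.lin = A) (hqA : q.lin = A⁻¹)
    {v : Fin 2 → ℤ} (hv : v ∈ translations S) : -v ∈ translations S := by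
  have hpq : (p * q).lin = 1 := by simp [hpA, hqA]
  have hqp : (q * p).lin = 1 := by simp [hpA, hqA]
  have hc := (translations S).add_mem (trans_mem_translations (mul_mem hp hq) hpq)
    (trans_mem_translations (mul_mem hq hp) hqp)
  refine (translations S).neg_mem_of_zsmul_add_mem hA hc (fun v hv => ?_) hv
  have cayley_hamilton : (A : Matrix (Fin 2) (Fin 2) ℤ) *ᵥ v + (A⁻¹ : SL2Z) *ᵥ v
      = Matrix.trace (A : Matrix (Fin 2) (Fin 2) ℤ) • v := by
    rw [← Matrix.add_mulVec, A.coe_add_coe_inv, Matrix.smul_mulVec, Matrix.one_mulVec]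
  have hpvq := trans_mem_translations (mul_mem (mul_mem hp hv) hq)
    (by simpa [translation] using hpq)
  have hqvp := trans_mem_translations (mul_mem (mul_mem hq hv) hp)
    (by simpa [translation] using hqp)
  rw [trans_mul_translation_mul, hpA] at hpvq
  rw [trans_mul_translation_mul, hqA] at hqvp
  convert (translations S).add_mem hpvq hqvp using 1
  rw [← cayley_hamilton]
  abel

theorem inv_mem_of_neg_mem_translations (hneg : ∀ v ∈ translations S, -v ∈ translations S)
    {g g' : SA2} (hg : g ∈ S) (hg' : g' ∈ S) (hgg' : g.lin * g'.lin = 1) : g⁻¹ ∈ S := by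
  have hinv : g⁻¹ = g' * translation (-(g * g').trans) := by
    rw [← inv_translation, ← eq_translation_of_lin_eq_one (s := g * g') hgg', mul_inv_rev,
      mul_inv_cancel_left]
  rw [hinv]
  exact mul_mem hg' (hneg _ (trans_mem_translations (mul_mem hg hg') hgg'))

theorem isSubgroup_of_map_linHom_eq {H : Subgroup SL2Z} (hS : (S.map linHom : Set SL2Z) = H)
    {A : SL2Z} (hAH : A ∈ H) (hA : Matrix.trace (A : Matrix (Fin 2) (Fin 2) ℤ) ≤ -1) :
    S.IsSubgroup := by
  have lift : ∀ B ∈ H, ∃ s ∈ S, s.lin = B := by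
    intro B hB
    rw [← SetLike.mem_coe, ← hS] at hB
    exact hB
  have lin_mem : ∀ s ∈ S, s.lin ∈ H := fun s hs =>
    SetLike.mem_coe.1 (hS ▸ Subsemigroup.mem_map_of_mem linHom hs)
  obtain ⟨p, hp, hpA⟩ := lift A hAH
  obtain ⟨q, hq, hqA⟩ := lift A⁻¹ (inv_mem hAH)
  have inv_mem_S : ∀ g ∈ S, g⁻¹ ∈ S := by
    intro g hg
    obtain ⟨g', hg', hg'g⟩ := lift g.lin⁻¹ (inv_mem (lin_mem g hg))
    exact inv_mem_of_neg_mem_translations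
      (fun v => neg_mem_translations hA hp hq hpA hqA) hg hg' (by rw [hg'g, mul_inv_cancel])
  exact ⟨mul_inv_cancel p ▸ mul_mem hp (inv_mem_S p hp), inv_mem_S⟩

end SA2

theorem sa2_closure_isGroup_of_inverting_scale_generator_general
    (K : ℕ) (Afam : Fin K → SL2Z) (a : Fin K → Fin 2 → ℤ) (A : SL2Z)
    (hgen : (Subsemigroup.closure (Set.range Afam) : Set SL2Z)
        = (Subgroup.zpowers A : Set SL2Z))
    (hA : IsInvertingScale A) :
    (Subsemigroup.closure (Set.range fun i => SA2.mk (Afam i) (a i))).IsSubgroup := by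
  refine SA2.isSubgroup_of_map_linHom_eq ?_ (Subgroup.mem_zpowers A)
    (hA.trans (by norm_num))
  rw [MulHom.map_mclosure, ← Set.range_comp]
  exact hgen

/-- If the subsemigroup `⟨A_1, …, A_K⟩` of `SL(2,ℤ)` is a group which
is infinite cyclic generated by an inverting scale `A`, then the subsemigroup of
`SA(2,ℤ)` generated by `𝒢 = {(A_1,a_1), …, (A_K,a_K)}` is a group. -/
theorem sa2_closure_isGroup_of_inverting_scale_generator
    (K : ℕ) (hK : 0 < K) (Afam : Fin K → SL2Z) (a : Fin K → Fin 2 → ℤ) (A : SL2Z)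
    (hgrp : (Subsemigroup.closure (Set.range Afam)).IsSubgroup)
    (hgen : (Subsemigroup.closure (Set.range Afam) : Set SL2Z)
        = (Subgroup.zpowers A : Set SL2Z))
    (hinf : Function.Injective fun n : ℤ => A ^ n)
    (hA : IsInvertingScale A) :
    (Subsemigroup.closure (Set.range fun i => SA2.mk (Afam i) (a i))).IsSubgroup :=
  sa2_closure_isGroup_of_inverting_scale_generator_general K Afam a A hgen hA
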